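/- arXiv:1608.03572 — 2 statements merged into one kernel-verified Lean document; each statement's English description precedes it below -/
import Mathlib

section
/- Let H_1, H_2 be subgroups of a finitely generated group π with word metric. Then for every sufficiently large R > 0, the set N_R(H_1) ∩ N_R(H_2) is at finite Hausdorff distance from H_1 ∩ H_2; i.e., the coarse intersection of H_1 and H_2 exists and is coarsely equivalent to H_1 ∩ H_2. -/
/-- The word length of `g` with respect to a generating set `S`: the least length of a word
in the elements of `S` and their inverses whose product is `g`. -/
noncomputable def wordLength {G : Type*} [Group G] (S : Set G) (g : G) : ℕ :=
  sInf {n : ℕ | ∃ l : List G, (∀ x ∈ l, x ∈ S ∨ x⁻¹ ∈ S) ∧ l.prod = g ∧ l.length = n}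

/-- The word metric on a group with respect to a generating set `S`. -/
noncomputable def wordDist {G : Type*} [Group G] (S : Set G) (a b : G) : ℕ :=
  wordLength S (a⁻¹ * b)

/-- If `S` generates `G`, every element is the product of a word of length `wordLength S g`. -/
lemma wordLength_spec {G : Type*} [Group G] {S : Set G}
    (hS : Subgroup.closure S = ⊤) (g : G) :
    ∃ l : List G, (∀ x ∈ l, x ∈ S ∨ x⁻¹ ∈ S) ∧ l.prod = g ∧
      l.length = wordLength S g := by
  have hg : g ∈ Submonoid.closure (S ∪ S⁻¹) := by
    rw [← Subgroup.closure_toSubmonoid S]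
    simp [hS]
  obtain ⟨l, h1, h2⟩ := Submonoid.exists_list_of_mem_closure hg
  have hne : (wordLength S g) ∈
      {n : ℕ | ∃ l : List G, (∀ x ∈ l, x ∈ S ∨ x⁻¹ ∈ S) ∧ l.prod = g ∧ l.length = n} := by
    apply Nat.sInf_mem
    exact ⟨l.length, l, fun x hx => (h1 x hx).imp id id, h2, rfl⟩
  obtain ⟨l', hl'⟩ := hne
  exact ⟨l', hl'.1, hl'.2.1, hl'.2.2⟩

lemma wordDist_self {G : Type*} [Group G] (S : Set G) (a : G) :
    wordDist S a a = 0 := by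
  have : (0 : ℕ) ∈
      {n : ℕ | ∃ l : List G, (∀ x ∈ l, x ∈ S ∨ x⁻¹ ∈ S) ∧ l.prod = a⁻¹ * a ∧ l.length = n} :=
    ⟨[], by simp⟩
  exact Nat.le_zero.mp (Nat.sInf_le this)

/-- Balls for the word metric of a finite generating set are finite. -/
lemma ball_finite {G : Type*} [Group G] (S : Finset G)
    (hS : Subgroup.closure (S : Set G) = ⊤) (R : ℕ) :
    {g : G | wordLength (S : Set G) g ≤ R}.Finite := by
  classical
  set T : Finset G := S ∪ S.image (·⁻¹) with hT
  have hsub : {g : G | wordLength (S : Set G) g ≤ R} ⊆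
      (fun l : List G => l.prod) ''
        ((fun l : List T => l.map Subtype.val) '' {l : List T | l.length ≤ R}) := by
    intro g hg
    obtain ⟨l, hl1, hl2, hl3⟩ := wordLength_spec hS g
    have hlT : ∀ x ∈ l, x ∈ T := by
      intro x hx
      rcases hl1 x hx with h | h
      · exact Finset.mem_union_left _ h
      · exact Finset.mem_union_right _ (Finset.mem_image.mpr ⟨x⁻¹, h, by simp⟩)
    refine ⟨l, ⟨l.attach.map (fun x => ⟨x.1, hlT x.1 x.2⟩), ?_, ?_⟩, hl2⟩
    · simpa [List.length_map] using hl3.le.trans hg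
    · simp [List.map_map, Function.comp]
  exact Set.Finite.subset (Set.Finite.image _ (Set.Finite.image _
    (List.finite_length_le T R))) hsub

/-- Let `H₁, H₂` be subgroups of a finitely generated group `π` with word metric. Then for
all sufficiently large `R`, the intersection of the `R`-neighborhoods of `H₁` and `H₂` is
at finite Hausdorff distance from `H₁ ∩ H₂`: the coarse intersection of `H₁` and `H₂`
exists and is coarsely equivalent to `H₁ ∩ H₂`. -/
theorem coarse_intersection_of_subgroups {π : Type*} [Group π]
    (S : Finset π) (hS : Subgroup.closure (S : Set π) = ⊤)
    (H₁ H₂ : Subgroup π) :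
    ∃ R₀ : ℕ, ∀ R : ℕ, R₀ ≤ R → ∃ D : ℕ,
      (∀ x : π,
        (∃ a ∈ H₁, wordDist (S : Set π) x a ≤ R) →
        (∃ b ∈ H₂, wordDist (S : Set π) x b ≤ R) →
        ∃ c ∈ H₁ ⊓ H₂, wordDist (S : Set π) x c ≤ D) ∧
      (∀ c ∈ H₁ ⊓ H₂,
        (∃ a ∈ H₁, wordDist (S : Set π) c a ≤ R) ∧
        (∃ b ∈ H₂, wordDist (S : Set π) c b ≤ R)) := by
  classical
  refine ⟨0, fun R _ => ?_⟩
  -- the finite set of relevant pairs of "offsets"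
  set P : Set (π × π) := {p | wordLength (S : Set π) p.1 ≤ R ∧ wordLength (S : Set π) p.2 ≤ R ∧
      ∃ x a b, a ∈ H₁ ∧ b ∈ H₂ ∧ p.1 = x⁻¹ * a ∧ p.2 = x⁻¹ * b} with hP
  have hPfin : P.Finite :=
    (Set.Finite.prod (ball_finite S hS R) (ball_finite S hS R)).subset
      (fun p hp => ⟨hp.1, hp.2.1⟩)
  -- choose a representative for each pair
  have hchoice : ∀ p ∈ P, ∃ x a b, a ∈ H₁ ∧ b ∈ H₂ ∧ p.1 = x⁻¹ * a ∧ p.2 = x⁻¹ * b :=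
    fun p hp => hp.2.2
  choose! w wa wb hwa hwb hweq1 hweq2 using hchoice
  set D : ℕ := hPfin.toFinset.sup (fun p => wordLength (S : Set π) (w p)⁻¹) with hD
  refine ⟨D, fun x hx1 hx2 => ?_, fun c hc => ?_⟩
  · obtain ⟨a, ha, hda⟩ := hx1
    obtain ⟨b, hb, hdb⟩ := hx2
    set p : π × π := (x⁻¹ * a, x⁻¹ * b) with hp
    have hpP : p ∈ P := ⟨hda, hdb, x, a, b, ha, hb, rfl, rfl⟩
    refine ⟨x * (w p)⁻¹, ⟨?_, ?_⟩, ?_⟩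
    · -- x * (w p)⁻¹ = a * (wa p)⁻¹ ∈ H₁
      have e : x⁻¹ * a = (w p)⁻¹ * wa p := hweq1 p hpP
      have key : a * (wa p)⁻¹ = x * (w p)⁻¹ := by
        have := congrArg (fun z => x * z * (wa p)⁻¹) e
        simpa [mul_assoc] using this
      exact key ▸ H₁.mul_mem ha (H₁.inv_mem (hwa p hpP))
    · -- x * (w p)⁻¹ = b * (wb p)⁻¹ ∈ H₂
      have e : x⁻¹ * b = (w p)⁻¹ * wb p := hweq2 p hpP
      have key : b * (wb p)⁻¹ = x * (w p)⁻¹ := by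
        have := congrArg (fun z => x * z * (wb p)⁻¹) e
        simpa [mul_assoc] using this
      exact key ▸ H₂.mul_mem hb (H₂.inv_mem (hwb p hpP))
    · -- distance bound
      have : wordDist (S : Set π) x (x * (w p)⁻¹) = wordLength (S : Set π) (w p)⁻¹ := by
        simp [wordDist]
      rw [this]
      exact Finset.le_sup (f := fun p => wordLength (S : Set π) (w p)⁻¹) (hPfin.mem_toFinset.mpr hpP)
  · obtain ⟨hc1, hc2⟩ := hc
    exact ⟨⟨c, hc1, by simp [wordDist_self]⟩, ⟨c, hc2, by simp [wordDist_self]⟩⟩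
end

section
/- Let (W,S) be a Coxeter system. Two irreducible spherical subsets T₁, T₂ ⊆ S form a nested pair (i.e., a 1-simplex of the subdivision L_⊘) if and only if they are either comparable (T₁ ⊆ T₂ or T₂ ⊆ T₁) or orthogonal (T₁ ∩ T₂ = ∅, T₁ ∪ T₂ is spherical, and m_{st} = 2 for all s ∈ T₁, t ∈ T₂). -/
/-!
Two distinct comparable subsets form a chain `T₁ ⊂ T₂`, which is nested as soon as both are
irreducible and spherical: `T₂` is its only maximal element and `{T₁}` lies below it. Two
incomparable subsets form an antichain, in which both are maximal with nothing below them, so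
nestedness says exactly that they are the two irreducible components of the spherical set
`T₁ ∪ T₂`, i.e. that they are orthogonal.
-/

/-- The Coxeter diagram of a Coxeter matrix. -/
def coxeterDiagram {B : Type*} (M : CoxeterMatrix B) : SimpleGraph B where
  Adj i j := i ≠ j ∧ M i j ≠ 2
  symm := by
    refine ⟨?_⟩
    intro i j h
    exact ⟨h.1.symm, by rw [M.symmetric]; exact h.2⟩
  loopless := by refine ⟨?_⟩; intro i h; exact h.1 rfl

variable {B W : Type*} [Group W] [DecidableEq B] {M : CoxeterMatrix B}

/-- `T` is a spherical subset: the special subgroup `W_T` is finite. -/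
def IsSpherical (cs : CoxeterSystem M W) (T : Finset B) : Prop :=
  Finite (Subgroup.closure (cs.simple '' (T : Set B)))

/-- `T` is irreducible: its Coxeter diagram is connected. -/
def DiagramIrreducible (M : CoxeterMatrix B) (T : Finset B) : Prop :=
  ((coxeterDiagram M).induce {b | b ∈ T}).Connected

/-- The support of a family of subsets of `S`: the union of its members. -/
def familySupport (α : Finset (Finset B)) : Finset B := α.sup id

/-- The maximal elements of a family of subsets. -/
def maxElems (α : Finset (Finset B)) : Finset (Finset B) :=
  α.filter fun T => ∀ T' ∈ α, ¬ T ⊂ T'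

/-- A family `α` of irreducible spherical subsets is *nested* if its support `sp(α)` is
spherical, its maximal elements are exactly the irreducible components of `sp(α)` (they are
irreducible, pairwise disjoint and pairwise orthogonal with respect to `M`, with union
`sp(α)`), and for each maximal element `T` the subfamily `α_{<T}` is nested. -/
def Nested (cs : CoxeterSystem M W) (α : Finset (Finset B)) : Prop :=
  α = ∅ ∨
    (IsSpherical cs (familySupport α) ∧
     (∀ T ∈ maxElems α, DiagramIrreducible M T) ∧
     (∀ T ∈ maxElems α, ∀ T' ∈ maxElems α, T ≠ T' →
        Disjoint T T' ∧ ∀ s ∈ T, ∀ t ∈ T', M s t = 2) ∧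
     (maxElems α).sup id = familySupport α ∧
     (∀ T ∈ maxElems α, Nested cs (α.filter fun T' => T' ⊂ T)))
termination_by α.card
decreasing_by
  refine Finset.card_lt_card ⟨Finset.filter_subset _ _, fun hsub => ?_⟩
  have hT : T ∈ α := Finset.mem_of_mem_filter T ‹T ∈ maxElems α›
  have := Finset.mem_filter.mp (hsub hT)
  exact ssubset_irrefl T this.2

def Orthogonal (M : CoxeterMatrix B) (T T' : Finset B) : Prop :=
  Disjoint T T' ∧ ∀ s ∈ T, ∀ t ∈ T', M s t = 2

omit [DecidableEq B] in
theorem Orthogonal.symm {T T' : Finset B} (h : Orthogonal M T T') : Orthogonal M T' T :=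
  ⟨h.1.symm, fun s hs t ht => M.symmetric s t ▸ h.2 t ht s hs⟩

theorem familySupport_pair (T₁ T₂ : Finset B) :
    familySupport ({T₁, T₂} : Finset (Finset B)) = T₁ ∪ T₂ := by
  simp [familySupport]

theorem nested_empty (cs : CoxeterSystem M W) : Nested cs (∅ : Finset (Finset B)) := by
  rw [Nested]
  exact Or.inl rfl

section Antichain

variable {α : Finset (Finset B)} (hα : IsAntichain (· ⊆ ·) (α : Set (Finset B)))
include hα

theorem maxElems_eq_self_of_isAntichain : maxElems α = α :=
  Finset.filter_true_of_mem fun _ hT _ hT' hlt => hlt.ne (hα.eq hT hT' hlt.subset)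

theorem filter_ssubset_eq_empty_of_isAntichain {T : Finset B} (hT : T ∈ α) :
    α.filter (· ⊂ T) = ∅ :=
  Finset.filter_false_of_mem fun _ hT' hlt => hlt.ne (hα.eq hT' hT hlt.subset)

theorem nested_iff_of_isAntichain (cs : CoxeterSystem M W) :
    Nested cs α ↔ α = ∅ ∨
      (IsSpherical cs (familySupport α) ∧ (∀ T ∈ α, DiagramIrreducible M T) ∧
        (α : Set (Finset B)).Pairwise (Orthogonal M)) := by
  have hbelow : ∀ T ∈ α, Nested cs (α.filter (· ⊂ T)) := fun T hT => by
    rw [filter_ssubset_eq_empty_of_isAntichain hα hT]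
    exact nested_empty cs
  rw [Nested, maxElems_eq_self_of_isAntichain hα]
  exact or_congr_right
    ⟨fun ⟨hsp, hirr, horth, _, _⟩ => ⟨hsp, hirr, horth⟩,
      fun ⟨hsp, hirr, horth⟩ => ⟨hsp, hirr, horth, rfl, hbelow⟩⟩

end Antichain

section Top

variable {α : Finset (Finset B)} {T : Finset B} (hT : ∀ T' ∈ α, T' ⊂ T)
include hT

theorem maxElems_insert_of_forall_ssubset : maxElems (insert T α) = {T} := by
  ext X
  simp only [maxElems, Finset.mem_filter, Finset.mem_insert, Finset.mem_singleton]
  constructor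
  · rintro ⟨rfl | hX, hmax⟩
    · rfl
    · exact absurd (hT X hX) (hmax T (Or.inl rfl))
  · rintro rfl
    exact ⟨Or.inl rfl, by rintro T' (rfl | hT'); exacts [ssubset_irrefl _, (hT T' hT').asymm]⟩

theorem familySupport_insert_of_forall_ssubset : familySupport (insert T α) = T := by
  rw [familySupport, Finset.sup_insert, id, sup_eq_left]
  exact Finset.sup_le fun T' hT' => (hT T' hT').subset

theorem filter_ssubset_insert_of_forall_ssubset : (insert T α).filter (· ⊂ T) = α := by
  rw [Finset.filter_insert, if_neg (ssubset_irrefl T), Finset.filter_true_of_mem hT]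

theorem Nested.insert_of_forall_ssubset {cs : CoxeterSystem M W} (hα : Nested cs α)
    (hs : IsSpherical cs T) (hi : DiagramIrreducible M T) : Nested cs (insert T α) := by
  have hmax := maxElems_insert_of_forall_ssubset hT
  have hsupp := familySupport_insert_of_forall_ssubset hT
  rw [Nested]
  refine Or.inr ⟨by rwa [hsupp], ?_, ?_, ?_, ?_⟩
  · simpa [hmax] using hi
  · simp [hmax]
  · simp [hmax, hsupp]
  · simpa [hmax, filter_ssubset_insert_of_forall_ssubset hT] using hα

end Top

theorem nested_singleton {cs : CoxeterSystem M W} {T : Finset B} (hs : IsSpherical cs T)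
    (hi : DiagramIrreducible M T) : Nested cs ({T} : Finset (Finset B)) := by
  simpa using (nested_empty cs).insert_of_forall_ssubset (by simp) hs hi

theorem nested_pair_of_ssubset {cs : CoxeterSystem M W} {T₁ T₂ : Finset B} (h : T₁ ⊂ T₂)
    (hs₁ : IsSpherical cs T₁) (hi₁ : DiagramIrreducible M T₁)
    (hs₂ : IsSpherical cs T₂) (hi₂ : DiagramIrreducible M T₂) :
    Nested cs ({T₁, T₂} : Finset (Finset B)) := by
  rw [Finset.pair_comm]
  exact (nested_singleton hs₁ hi₁).insert_of_forall_ssubset (by simpa using h) hs₂ hi₂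

theorem nested_pair_iff_orthogonal_of_not_subset {cs : CoxeterSystem M W} {T₁ T₂ : Finset B}
    (h₁ : ¬T₁ ⊆ T₂) (h₂ : ¬T₂ ⊆ T₁)
    (hi₁ : DiagramIrreducible M T₁) (hi₂ : DiagramIrreducible M T₂) :
    Nested cs {T₁, T₂} ↔ IsSpherical cs (T₁ ∪ T₂) ∧ Orthogonal M T₁ T₂ := by
  have h12 : T₁ ≠ T₂ := fun h => h₁ h.subset
  have hanti : IsAntichain (· ⊆ ·) (({T₁, T₂} : Finset (Finset B)) : Set (Finset B)) := by
    rw [Finset.coe_pair]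
    exact Set.pairwise_pair.2 fun _ => ⟨h₁, h₂⟩
  rw [nested_iff_of_isAntichain hanti, familySupport_pair, Finset.coe_pair, Set.pairwise_pair]
  simp [h12, hi₁, hi₂, and_iff_left_of_imp Orthogonal.symm]

theorem nested_pair_iff_comparable_or_orthogonal_general
    (cs : CoxeterSystem M W) (T₁ T₂ : Finset B)
    (hs₁ : IsSpherical cs T₁) (hs₂ : IsSpherical cs T₂)
    (hi₁ : DiagramIrreducible M T₁) (hi₂ : DiagramIrreducible M T₂)
    (h12 : T₁ ≠ T₂) :
    Nested cs {T₁, T₂} ↔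
      (T₁ ⊆ T₂ ∨ T₂ ⊆ T₁ ∨
        (T₁ ∩ T₂ = ∅ ∧ IsSpherical cs (T₁ ∪ T₂) ∧
          ∀ s ∈ T₁, ∀ t ∈ T₂, M s t = 2)) := by
  by_cases h₁ : T₁ ⊆ T₂
  · exact iff_of_true (nested_pair_of_ssubset (h₁.ssubset_of_ne h12) hs₁ hi₁ hs₂ hi₂) (Or.inl h₁)
  by_cases h₂ : T₂ ⊆ T₁
  · refine iff_of_true ?_ (Or.inr (Or.inl h₂))
    rw [Finset.pair_comm]
    exact nested_pair_of_ssubset (h₂.ssubset_of_ne h12.symm) hs₂ hi₂ hs₁ hi₁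
  rw [nested_pair_iff_orthogonal_of_not_subset h₁ h₂ hi₁ hi₂, Orthogonal,
    Finset.disjoint_iff_inter_eq_empty]
  simp only [h₁, h₂, false_or]
  exact and_left_comm

/-- Two distinct irreducible spherical subsets `T₁, T₂` form a nested pair (a 1-simplex of
the subdivision `L_⊘`) if and only if they are comparable or orthogonal. -/
theorem nested_pair_iff_comparable_or_orthogonal
    (cs : CoxeterSystem M W) (T₁ T₂ : Finset B) (hne₁ : T₁.Nonempty) (hne₂ : T₂.Nonempty)
    (hs₁ : IsSpherical cs T₁) (hs₂ : IsSpherical cs T₂)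
    (hi₁ : DiagramIrreducible M T₁) (hi₂ : DiagramIrreducible M T₂)
    (h12 : T₁ ≠ T₂) :
    Nested cs {T₁, T₂} ↔
      (T₁ ⊆ T₂ ∨ T₂ ⊆ T₁ ∨
        (T₁ ∩ T₂ = ∅ ∧ IsSpherical cs (T₁ ∪ T₂) ∧
          ∀ s ∈ T₁, ∀ t ∈ T₂, M s t = 2)) :=
  nested_pair_iff_comparable_or_orthogonal_general cs T₁ T₂ hs₁ hs₂ hi₁ hi₂ h12
end
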